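/- Let $y = (y_1, y_2)$ with $y_2 > 0$ and $y' = (y_1, -y_2)$ its reflection. Then for every $\delta > 0$ there is $C > 0$ depending only on $k$ and $\delta$ such that $|\Phi_k(x,y) - \Phi_k(x,y')| \le C (1+|x_2|)(1+|y_2|)\big(|x-y|^{-3/2} + |x-y'|^{-3/2}\big)$ for all $x$ with $|x-y| \ge \delta$ and $|x-y'| \ge \delta$. -/
import Mathlib

set_option maxHeartbeats 1000000


/-- Improved decay of the difference `Φ_k(x,y) - Φ_k(x,y')`, where `y' = (y₁,-y₂)` is the
reflection of `y` across the horizontal axis: for every `δ > 0` there is `C > 0` depending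
only on `k, δ` with
`|Φ_k(x,y) - Φ_k(x,y')| ≤ C (1+|x₂|)(1+|y₂|)(|x-y|^{-3/2} + |x-y'|^{-3/2})`
whenever `|x-y| ≥ δ` and `|x-y'| ≥ δ`.  Here `Φ_k(x,y) = (i/4) H₀⁽¹⁾(k|x-y|)`, with
`H₀⁽¹⁾` the Hankel function of the first kind of order zero, encoded through
`H₀⁽¹⁾' = -H₁⁽¹⁾` and the large-argument decay of `H₁⁽¹⁾`. -/
theorem stmt16 (k : ℝ) (hk : 0 < k) (H0 H1 : ℝ → ℂ)
    (hderiv : ∀ t : ℝ, 0 < t → HasDerivAt H0 (-H1 t) t)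
    (hcont : ContinuousOn H1 (Set.Ioi 0))
    (hasym : ∃ C₀ T : ℝ, 0 < T ∧ ∀ t ≥ T, ‖H1 t‖ ≤ C₀ * t ^ (-(1/2 : ℝ)))
    (Φ : EuclideanSpace ℝ (Fin 2) → EuclideanSpace ℝ (Fin 2) → ℂ)
    (hΦ : ∀ x y, Φ x y = (Complex.I / 4) * H0 (k * dist x y)) :
    ∀ δ > (0 : ℝ), ∃ C > (0 : ℝ), ∀ x y y' : EuclideanSpace ℝ (Fin 2),
      0 < y 1 → y' 0 = y 0 → y' 1 = -(y 1) →
      δ ≤ dist x y → δ ≤ dist x y' →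
      ‖Φ x y - Φ x y'‖ ≤
        C * (1 + |x 1|) * (1 + |y 1|) *
          ((dist x y) ^ (-(3/2 : ℝ)) + (dist x y') ^ (-(3/2 : ℝ))) := by
  obtain ⟨C₀, T, hT, hC₀⟩ := hasym
  intro δ hδ
  have hkδ : 0 < k * δ := mul_pos hk hδ
  -- bound for H1 on the compact part
  obtain ⟨B, hB⟩ := (isCompact_Icc (a := k * δ) (b := T)).exists_bound_of_continuousOn
    (hcont.mono (fun t ht => lt_of_lt_of_le hkδ ht.1))
  set Mc : ℝ := max (max C₀ 0) (max B 0 * T ^ ((1:ℝ)/2)) with hMc_def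
  have hMc0 : 0 ≤ Mc := le_trans (le_max_right C₀ 0) (le_max_left _ _)
  have hH1 : ∀ t : ℝ, k * δ ≤ t → ‖H1 t‖ ≤ Mc * t ^ (-(1/2 : ℝ)) := by
    intro t ht
    have ht0 : 0 < t := lt_of_lt_of_le hkδ ht
    have htpow : 0 < t ^ (-(1/2 : ℝ)) := Real.rpow_pos_of_pos ht0 _
    rcases le_or_gt T t with hTt | hTt
    · calc ‖H1 t‖ ≤ C₀ * t ^ (-(1/2 : ℝ)) := hC₀ t hTt
        _ ≤ Mc * t ^ (-(1/2 : ℝ)) := by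
            apply mul_le_mul_of_nonneg_right _ htpow.le
            exact le_trans (le_max_left C₀ 0) (le_max_left _ _)
    · have h1 : ‖H1 t‖ ≤ max B 0 := le_trans (hB t ⟨ht, hTt.le⟩) (le_max_left B 0)
      have h2 : T ^ (-(1/2 : ℝ)) ≤ t ^ (-(1/2 : ℝ)) :=
        Real.rpow_le_rpow_of_nonpos ht0 hTt.le (by norm_num)
      have h3 : (1:ℝ) ≤ T ^ ((1:ℝ)/2) * t ^ (-(1/2 : ℝ)) := by
        have : T ^ ((1:ℝ)/2) * T ^ (-(1/2 : ℝ)) = 1 := by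
          rw [← Real.rpow_add hT]; norm_num
        calc (1:ℝ) = T ^ ((1:ℝ)/2) * T ^ (-(1/2 : ℝ)) := this.symm
          _ ≤ T ^ ((1:ℝ)/2) * t ^ (-(1/2 : ℝ)) :=
            mul_le_mul_of_nonneg_left h2 (Real.rpow_nonneg hT.le _)
      have h4 : max B 0 ≤ (max B 0 * T ^ ((1:ℝ)/2)) * t ^ (-(1/2 : ℝ)) := by
        have := mul_le_mul_of_nonneg_left h3 (le_max_right B 0)
        linarith [this]
      calc ‖H1 t‖ ≤ max B 0 := h1
        _ ≤ (max B 0 * T ^ ((1:ℝ)/2)) * t ^ (-(1/2 : ℝ)) := h4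
        _ ≤ Mc * t ^ (-(1/2 : ℝ)) :=
          mul_le_mul_of_nonneg_right (le_max_right _ _) htpow.le
  set K : ℝ := Mc * k ^ ((1:ℝ)/2) with hK_def
  have hK0 : 0 ≤ K := mul_nonneg hMc0 (Real.rpow_nonneg hk.le _)
  refine ⟨K + 1, by linarith, ?_⟩
  intro x y y' hy hy0 hy1 hrδ hr'δ
  set r := dist x y with hr_def
  set r' := dist x y' with hr'_def
  have hr0 : 0 < r := lt_of_lt_of_le hδ hrδ
  have hr'0 : 0 < r' := lt_of_lt_of_le hδ hr'δ
  set m := min r r' with hm_def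
  have hmδ : δ ≤ m := le_min hrδ hr'δ
  have hm0 : 0 < m := lt_of_lt_of_le hδ hmδ
  -- geometric identity
  have hr2 : r ^ 2 = (x 0 - y 0) ^ 2 + (x 1 - y 1) ^ 2 := by
    rw [hr_def, EuclideanSpace.dist_eq, Real.sq_sqrt (by positivity)]
    simp [Fin.sum_univ_two, Real.dist_eq, sq_abs]
  have hr'2 : r' ^ 2 = (x 0 - y 0) ^ 2 + (x 1 + y 1) ^ 2 := by
    rw [hr'_def, EuclideanSpace.dist_eq, Real.sq_sqrt (by positivity)]
    simp only [Fin.sum_univ_two, Real.dist_eq, sq_abs, hy0, hy1]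
    ring
  have hdiff : (r - r') * (r + r') = -(4 * (x 1) * (y 1)) := by
    have : r ^ 2 - r' ^ 2 = -(4 * (x 1) * (y 1)) := by rw [hr2, hr'2]; ring
    nlinarith [this]
  have habs : |r - r'| * (r + r') = 4 * |x 1| * (y 1) := by
    have h1 : |(r - r') * (r + r')| = |r - r'| * (r + r') := by
      rw [abs_mul, abs_of_nonneg (show (0:ℝ) ≤ r + r' by linarith)]
    have h2 : |(-(4 * (x 1) * (y 1)))| = 4 * |x 1| * (y 1) := by
      rw [abs_neg, abs_mul, abs_mul]
      rw [abs_of_nonneg (by norm_num : (0:ℝ) ≤ 4), abs_of_pos hy]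
    rw [← h1, hdiff, h2]
  have hdm : |r - r'| * m ≤ 4 * |x 1| * (y 1) := by
    rw [← habs]
    apply mul_le_mul_of_nonneg_left _ (abs_nonneg _)
    have : m ≤ r := min_le_left _ _
    linarith
  -- mean value estimate
  have hmem_r : k * r ∈ Set.Icc (k * m) (k * max r r') := by
    constructor
    · exact mul_le_mul_of_nonneg_left (min_le_left _ _) hk.le
    · exact mul_le_mul_of_nonneg_left (le_max_left _ _) hk.le
  have hmem_r' : k * r' ∈ Set.Icc (k * m) (k * max r r') := by
    constructor
    · exact mul_le_mul_of_nonneg_left (min_le_right _ _) hk.le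
    · exact mul_le_mul_of_nonneg_left (le_max_right _ _) hk.le
  have hkm0 : 0 < k * m := mul_pos hk hm0
  have key : ‖H0 (k * r) - H0 (k * r')‖ ≤
      (Mc * (k * m) ^ (-(1/2 : ℝ))) * ‖(k * r) - (k * r')‖ := by
    apply Convex.norm_image_sub_le_of_norm_hasDerivWithin_le
      (f' := fun t => -H1 t) (s := Set.Icc (k * m) (k * max r r'))
    · intro t ht
      exact (hderiv t (lt_of_lt_of_le hkm0 ht.1)).hasDerivWithinAt
    · intro t ht
      have htkδ : k * δ ≤ t := le_trans (mul_le_mul_of_nonneg_left hmδ hk.le) ht.1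
      have h1 : ‖-H1 t‖ = ‖H1 t‖ := norm_neg _
      rw [h1]
      refine le_trans (hH1 t htkδ) ?_
      apply mul_le_mul_of_nonneg_left _ hMc0
      exact Real.rpow_le_rpow_of_nonpos hkm0 ht.1 (by norm_num)
    · exact convex_Icc _ _
    · exact hmem_r'
    · exact hmem_r
  -- rewrite the Φ difference
  have hΦnorm : ‖Φ x y - Φ x y'‖ = (1/4) * ‖H0 (k * r) - H0 (k * r')‖ := by
    rw [hΦ, hΦ, ← mul_sub, norm_mul, ← hr_def, ← hr'_def]
    congr 1
    rw [norm_div, Complex.norm_I]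
    norm_num
  have hnorm_sub : ‖(k * r) - (k * r')‖ = k * |r - r'| := by
    rw [Real.norm_eq_abs, ← mul_sub, abs_mul, abs_of_pos hk]
  -- rpow algebra
  have hsplit : (k * m) ^ (-(1/2 : ℝ)) = k ^ (-(1/2 : ℝ)) * m ^ (-(1/2 : ℝ)) :=
    Real.mul_rpow hk.le hm0.le
  have hkhalf : k ^ (-(1/2 : ℝ)) * k = k ^ ((1:ℝ)/2) := by
    nth_rewrite 2 [← Real.rpow_one k]
    rw [← Real.rpow_add hk]; norm_num
  have hM3m : m ^ (-(3/2 : ℝ)) * m = m ^ (-(1/2 : ℝ)) := by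
    nth_rewrite 2 [← Real.rpow_one m]
    rw [← Real.rpow_add hm0]; norm_num
  set M3 : ℝ := m ^ (-(3/2 : ℝ)) with hM3_def
  have hM30 : 0 ≤ M3 := Real.rpow_nonneg hm0.le _
  set A : ℝ := r ^ (-(3/2 : ℝ)) + r' ^ (-(3/2 : ℝ)) with hA_def
  have hM3A : M3 ≤ A := by
    rcases min_choice r r' with h | h
    · rw [hM3_def, hm_def, h, hA_def]
      have : (0:ℝ) ≤ r' ^ (-(3/2 : ℝ)) := Real.rpow_nonneg hr'0.le _
      linarith
    · rw [hM3_def, hm_def, h, hA_def]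
      have : (0:ℝ) ≤ r ^ (-(3/2 : ℝ)) := Real.rpow_nonneg hr0.le _
      linarith
  have hA0 : 0 ≤ A := le_trans hM30 hM3A
  -- put everything together
  have hmain : ‖Φ x y - Φ x y'‖ ≤ K * M3 * (|x 1| * (y 1)) := by
    rw [hΦnorm]
    calc (1/4) * ‖H0 (k * r) - H0 (k * r')‖
        ≤ (1/4) * ((Mc * (k * m) ^ (-(1/2 : ℝ))) * ‖(k * r) - (k * r')‖) := by
          linarith [key]
      _ = (1/4) * (K * (m ^ (-(1/2 : ℝ)) * |r - r'|)) := by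
          rw [hnorm_sub, hsplit, hK_def]
          rw [← hkhalf]; ring
      _ = (1/4) * (K * (M3 * (|r - r'| * m))) := by
          rw [show M3 * (|r - r'| * m) = (M3 * m) * |r - r'| by ring, hM3m]
      _ ≤ (1/4) * (K * (M3 * (4 * |x 1| * (y 1)))) := by
          have h5 := mul_le_mul_of_nonneg_left hdm hM30
          have h6 := mul_le_mul_of_nonneg_left h5 hK0
          linarith
      _ = K * M3 * (|x 1| * (y 1)) := by ring
  have hab : |x 1| * (y 1) ≤ (1 + |x 1|) * (1 + |y 1|) := by
    have h1 : 0 ≤ |x 1| := abs_nonneg _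
    have h2 : |y 1| = y 1 := abs_of_pos hy
    nlinarith [h1, hy]
  have hprod0 : (0:ℝ) ≤ (1 + |x 1|) * (1 + |y 1|) := by positivity
  have e1 : K * M3 * (|x 1| * (y 1)) ≤ K * M3 * ((1 + |x 1|) * (1 + |y 1|)) :=
    mul_le_mul_of_nonneg_left hab (mul_nonneg hK0 hM30)
  have e2 : K * M3 ≤ (K + 1) * A :=
    mul_le_mul (by linarith) hM3A hM30 (by linarith)
  have e3 : K * M3 * ((1 + |x 1|) * (1 + |y 1|)) ≤
      (K + 1) * A * ((1 + |x 1|) * (1 + |y 1|)) :=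
    mul_le_mul_of_nonneg_right e2 hprod0
  calc ‖Φ x y - Φ x y'‖ ≤ K * M3 * (|x 1| * (y 1)) := hmain
    _ ≤ (K + 1) * A * ((1 + |x 1|) * (1 + |y 1|)) := le_trans e1 e3
    _ = (K + 1) * (1 + |x 1|) * (1 + |y 1|) * A := by ring
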